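/- arXiv:0705.4498 — 5 statements merged into one kernel-verified Lean document; each statement's English description precedes it below -/
import Mathlib

section
/- In the semigroup F_θ⁺, if u, u' are words in the e-generators with |u| = |u'|, v, v' are words in the f-generators with |v| = |v'|, and e_u f_v = e_{u'} f_{v'} in F_θ⁺, then u = u' and v = v'. (Unique factorization with all e's first.) -/
inductive TwoGraphGen (I J : Type) : Type
  | e : I → TwoGraphGen I J
  | f : J → TwoGraphGen I J

def twoGraphRel {I J : Type} (θ : Equiv.Perm (I × J)) :
    FreeMonoid (TwoGraphGen I J) → FreeMonoid (TwoGraphGen I J) → Prop :=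
  fun a b => ∃ i j,
    a = FreeMonoid.of (TwoGraphGen.e i) * FreeMonoid.of (TwoGraphGen.f j) ∧
    b = FreeMonoid.of (TwoGraphGen.f (θ (i, j)).2) * FreeMonoid.of (TwoGraphGen.e (θ (i, j)).1)

def FTheta {I J : Type} (θ : Equiv.Perm (I × J)) : Type :=
  (conGen (twoGraphRel θ)).Quotient

instance {I J : Type} (θ : Equiv.Perm (I × J)) : Monoid (FTheta θ) :=
  inferInstanceAs (Monoid (conGen (twoGraphRel θ)).Quotient)

def FTheta.E {I J : Type} (θ : Equiv.Perm (I × J)) (i : I) : FTheta θ :=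
  (conGen (twoGraphRel θ)).mk' (FreeMonoid.of (TwoGraphGen.e i))

def FTheta.F {I J : Type} (θ : Equiv.Perm (I × J)) (j : J) : FTheta θ :=
  (conGen (twoGraphRel θ)).mk' (FreeMonoid.of (TwoGraphGen.f j))

def FTheta.eWord {I J : Type} (θ : Equiv.Perm (I × J)) (u : List I) : FTheta θ :=
  (u.map (FTheta.E θ)).prod

def FTheta.fWord {I J : Type} (θ : Equiv.Perm (I × J)) (v : List J) : FTheta θ :=
  (v.map (FTheta.F θ)).prod

/-! Let `F_θ⁺` act on the left of `List I × List J`, a pair `(u, v)` standing for `e_u f_v`: `e_i`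
prepends `i` to `u`, and `f_j` is slid leftwards through `e_u` by the relations read backwards
(`f_j e_i = e_{i'} f_{j'}` for `θ (i', j') = (i, j)`) before being prepended to `v`. The defining
relations hold in this action, and `e_u f_v` sends `([], [])` to `(u, v)`, so both words can be
read off from the element. -/

namespace FTheta

variable {I J : Type} (θ : Equiv.Perm (I × J))

def slideF : J → List I → List I × J
  | j, [] => ([], j)
  | j, i :: u =>
    let p := θ.symm (i, j)
    ((p.1 :: (slideF p.2 u).1), (slideF p.2 u).2)

def genAction : TwoGraphGen I J → Function.End (List I × List J)
  | .e i => fun p => (i :: p.1, p.2)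
  | .f j => fun p => ((slideF θ j p.1).1, (slideF θ j p.1).2 :: p.2)

theorem twoGraphRel_le_ker :
    twoGraphRel θ ≤ ⇑(Con.ker (FreeMonoid.lift (genAction θ))) := by
  rintro _ _ ⟨i, j, rfl, rfl⟩
  funext p
  show genAction θ (.e i) (genAction θ (.f j) p) =
    genAction θ (.f (θ (i, j)).2) (genAction θ (.e (θ (i, j)).1) p)
  simp [genAction, slideF]

def toEnd : FTheta θ →* Function.End (List I × List J) :=
  (conGen (twoGraphRel θ)).lift (FreeMonoid.lift (genAction θ))
    (Con.conGen_le.mpr (twoGraphRel_le_ker θ))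

theorem toEnd_mul_apply (x y : FTheta θ) (p : List I × List J) :
    toEnd θ (x * y) p = toEnd θ x (toEnd θ y p) := by
  rw [map_mul]
  rfl

theorem toEnd_E (i : I) : toEnd θ (E θ i) = genAction θ (.e i) :=
  Con.lift_mk' _ _

theorem toEnd_F (j : J) : toEnd θ (F θ j) = genAction θ (.f j) :=
  Con.lift_mk' _ _

theorem toEnd_eWord (u : List I) (p : List I × List J) :
    toEnd θ (eWord θ u) p = (u ++ p.1, p.2) := by
  induction u with
  | nil => exact congrFun (map_one (toEnd θ)) p
  | cons i u ih =>
    rw [eWord, List.map_cons, List.prod_cons, toEnd_mul_apply, ← eWord, ih, toEnd_E]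
    rfl

theorem toEnd_fWord (v w : List J) : toEnd θ (fWord θ v) ([], w) = ([], v ++ w) := by
  induction v with
  | nil => exact congrFun (map_one (toEnd θ)) _
  | cons j v ih =>
    rw [fWord, List.map_cons, List.prod_cons, toEnd_mul_apply, ← fWord, ih, toEnd_F]
    rfl

theorem toEnd_eWord_mul_fWord (u : List I) (v : List J) :
    toEnd θ (eWord θ u * fWord θ v) ([], []) = (u, v) := by
  rw [toEnd_mul_apply, toEnd_fWord, toEnd_eWord, List.append_nil, List.append_nil]

theorem eWord_mul_fWord_injective :
    Function.Injective fun p : List I × List J => eWord θ p.1 * fWord θ p.2 :=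
  Function.LeftInverse.injective (g := fun x => toEnd θ x ([], []))
    fun p => toEnd_eWord_mul_fWord θ p.1 p.2

end FTheta

theorem unique_factorization_e_first_general {m n : ℕ} (θ : Equiv.Perm (Fin m × Fin n))
    (u u' : List (Fin m)) (v v' : List (Fin n))
    (h : FTheta.eWord θ u * FTheta.fWord θ v = FTheta.eWord θ u' * FTheta.fWord θ v') :
    u = u' ∧ v = v' :=
  Prod.ext_iff.mp (FTheta.eWord_mul_fWord_injective θ (a₁ := (u, v)) (a₂ := (u', v')) h)

/-- Unique factorization in F_θ⁺ with all e's first: if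
e_u f_v = e_{u'} f_{v'} with |u| = |u'| and |v| = |v'|, then u = u' and v = v'. -/
theorem unique_factorization_e_first {m n : ℕ} (θ : Equiv.Perm (Fin m × Fin n))
    (u u' : List (Fin m)) (v v' : List (Fin n))
    (hu : u.length = u'.length) (hv : v.length = v'.length)
    (h : FTheta.eWord θ u * FTheta.fWord θ v = FTheta.eWord θ u' * FTheta.fWord θ v') :
    u = u' ∧ v = v' :=
  unique_factorization_e_first_general θ u u' v v' h
end

section
/- Let ρ be an atomic partially isometric representation of F_θ⁺ on a Hilbert space with distinguished orthonormal basis. If ξ is a basis vector and u (a word in the e's) and v (a word in the f's) satisfy ρ(e_u)·ℂξ = ℂξ = ρ(f_v)·ℂξ, then e_u f_v = f_v e_u in F_θ⁺. -/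
/-!
Push `e_u` through `f_v` repeatedly: `f_v e_u ^ k = e_{x₀} ⋯ e_{xₖ₋₁} f_{yₖ}` with `|xᵢ| = |u|`
and `|yₖ| = |v|`. There are finitely many `f`-words of length `|v|`, so `y_{M+L} = y_L` for some
`M > 0`. Both `e_{x₀ ⋯ x_{M+L-1}}` and `e_u ^ M e_{x₀ ⋯ x_{L-1}}` then carry the basis vector
reached by `f_{y_L}` back to `ξ`, so they are the same word: `xₖ = u` for `k < M` and
`x_{M+k} = xₖ`. Uniqueness of `f`-words lets us walk the chain back to `y_M = y₀ = v`, and then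
`e_u f_v = f_{y_{M-1}} e_u`, where `f_{y_{M-1}}` fixes `ℂξ` like `f_v`, forces `y_{M-1} = v`.
-/

theorem List.eq_of_flatten_eq_of_map_length_eq {α : Type*} {L L' : List (List α)}
    (h : L.flatten = L'.flatten) (hlen : L.map length = L'.map length) : L = L' := by
  induction L generalizing L' with
  | nil => cases L' <;> simp_all
  | cons l L ih =>
    cases L' with
    | nil => simp at hlen
    | cons l' L' =>
      simp only [List.map_cons, List.cons.injEq] at hlen
      obtain ⟨rfl, hrest⟩ := List.append_inj h hlen.1
      rw [ih hrest hlen.2]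

namespace FTheta

variable {I J : Type} (θ : Equiv.Perm (I × J))

@[simp]
theorem eWord_nil : eWord θ [] = 1 := rfl

@[simp]
theorem fWord_nil : fWord θ [] = 1 := rfl

@[simp]
theorem eWord_cons (i : I) (x : List I) : eWord θ (i :: x) = E θ i * eWord θ x := by
  simp [eWord]

@[simp]
theorem fWord_cons (j : J) (y : List J) : fWord θ (j :: y) = F θ j * fWord θ y := by
  simp [fWord]

@[simp]
theorem eWord_append (x x' : List I) : eWord θ (x ++ x') = eWord θ x * eWord θ x' := by
  simp [eWord]

theorem eWord_flatten (L : List (List I)) : eWord θ L.flatten = (L.map (eWord θ)).prod := by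
  induction L with
  | nil => rfl
  | cons x L ih => simp [ih]

theorem E_mul_F (i : I) (j : J) : E θ i * F θ j = F θ (θ (i, j)).2 * E θ (θ (i, j)).1 :=
  (Con.eq _).2 (ConGen.Rel.of _ _ ⟨i, j, rfl, rfl⟩)

theorem exists_E_mul_F_eq_F_mul_E (i : I) (j : J) :
    ∃ i' j', E θ i' * F θ j' = F θ j * E θ i :=
  ⟨(θ.symm (i, j)).1, (θ.symm (i, j)).2, by rw [E_mul_F, Prod.mk.eta, Equiv.apply_symm_apply]⟩

theorem exists_E_mul_fWord_eq_fWord_mul_E (i : I) (y : List J) :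
    ∃ i' y', y'.length = y.length ∧ E θ i' * fWord θ y' = fWord θ y * E θ i := by
  induction y generalizing i with
  | nil => exact ⟨i, [], rfl, by simp⟩
  | cons j y ih =>
    obtain ⟨i₁, y₁, hlen, h₁⟩ := ih i
    obtain ⟨i₂, j₂, h₂⟩ := exists_E_mul_F_eq_F_mul_E θ i₁ j
    refine ⟨i₂, j₂ :: y₁, by simp [hlen], ?_⟩
    rw [fWord_cons, fWord_cons, ← mul_assoc, h₂, mul_assoc, h₁, mul_assoc]

theorem exists_eWord_mul_fWord_eq_fWord_mul_eWord (x : List I) (y : List J) :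
    ∃ p : List I × List J, p.1.length = x.length ∧ p.2.length = y.length ∧
      eWord θ p.1 * fWord θ p.2 = fWord θ y * eWord θ x := by
  induction x generalizing y with
  | nil => exact ⟨([], y), rfl, rfl, by simp⟩
  | cons i x ih =>
    obtain ⟨i₁, y₁, hlen₁, h₁⟩ := exists_E_mul_fWord_eq_fWord_mul_E θ i y
    obtain ⟨⟨x₂, y₂⟩, hx₂, hy₂, h₂⟩ := ih y₁
    refine ⟨(i₁ :: x₂, y₂), by simp [hx₂], hy₂.trans hlen₁, ?_⟩
    rw [eWord_cons, eWord_cons, mul_assoc, h₂, ← mul_assoc, h₁, mul_assoc]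

noncomputable def refactor (x : List I) (y : List J) : List I × List J :=
  (exists_eWord_mul_fWord_eq_fWord_mul_eWord θ x y).choose

theorem length_refactor_fst (x : List I) (y : List J) :
    (refactor θ x y).1.length = x.length :=
  (exists_eWord_mul_fWord_eq_fWord_mul_eWord θ x y).choose_spec.1

theorem length_refactor_snd (x : List I) (y : List J) :
    (refactor θ x y).2.length = y.length :=
  (exists_eWord_mul_fWord_eq_fWord_mul_eWord θ x y).choose_spec.2.1

theorem eWord_mul_fWord_refactor (x : List I) (y : List J) :
    eWord θ (refactor θ x y).1 * fWord θ (refactor θ x y).2 = fWord θ y * eWord θ x :=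
  (exists_eWord_mul_fWord_eq_fWord_mul_eWord θ x y).choose_spec.2.2

/-- `chainF θ u v k = yₖ` and `chainE θ u v k = xₖ`, where `y₀ = v` and
`f_{yₖ} e_u = e_{xₖ} f_{yₖ₊₁}` is the chosen refactorization. -/
noncomputable def chainF (u : List I) (v : List J) (k : ℕ) : List J :=
  (fun y => (refactor θ u y).2)^[k] v

noncomputable def chainE (u : List I) (v : List J) (k : ℕ) : List I :=
  (refactor θ u (chainF θ u v k)).1

variable (u : List I) (v : List J)

@[simp]
theorem chainF_zero : chainF θ u v 0 = v := rfl

theorem chainF_succ (k : ℕ) : chainF θ u v (k + 1) = (refactor θ u (chainF θ u v k)).2 :=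
  Function.iterate_succ_apply' _ _ _

@[simp]
theorem length_chainF (k : ℕ) : (chainF θ u v k).length = v.length := by
  induction k with
  | zero => rfl
  | succ k ih => rw [chainF_succ, length_refactor_snd, ih]

@[simp]
theorem length_chainE (k : ℕ) : (chainE θ u v k).length = u.length :=
  length_refactor_fst θ u _

theorem eWord_chainE_mul_fWord_chainF_succ (k : ℕ) :
    eWord θ (chainE θ u v k) * fWord θ (chainF θ u v (k + 1)) =
      fWord θ (chainF θ u v k) * eWord θ u := by
  rw [chainF_succ, chainE, eWord_mul_fWord_refactor]

theorem fWord_mul_eWord_pow (k : ℕ) :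
    fWord θ v * eWord θ u ^ k =
      eWord θ ((List.range k).map (chainE θ u v)).flatten * fWord θ (chainF θ u v k) := by
  induction k with
  | zero => simp
  | succ k ih =>
    rw [pow_succ, ← mul_assoc, ih, mul_assoc, ← eWord_chainE_mul_fWord_chainF_succ,
      List.range_succ, List.map_append, List.flatten_append, eWord_append]
    simp [mul_assoc]

end FTheta

section Rays

variable {H : Type*} [NormedAddCommGroup H] [NormedSpace ℂ H]

def Carries (A : H →L[ℂ] H) (x y : H) : Prop :=
  ∃ α : ℂ, α ≠ 0 ∧ A x = α • y

namespace Carries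

variable {A B C : H →L[ℂ] H} {x y z : H}

theorem mul (hA : Carries A x y) (hB : Carries B y z) : Carries (B * A) x z := by
  obtain ⟨α, hα, hAx⟩ := hA
  obtain ⟨β, hβ, hBy⟩ := hB
  exact ⟨α * β, mul_ne_zero hα hβ, by rw [mul_apply_eq_comp, hAx, map_smul, hBy, smul_smul]⟩

theorem pow (h : Carries A x x) (k : ℕ) : Carries (A ^ k) x x := by
  induction k with
  | zero => exact ⟨1, one_ne_zero, by simp⟩
  | succ k ih => rw [pow_succ]; exact h.mul ih

theorem of_mul (h : Carries (B * A) x z) (hA : Carries A x y) : Carries B y z := by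
  obtain ⟨γ, hγ, hx⟩ := h
  obtain ⟨α, hα, hAx⟩ := hA
  refine ⟨α⁻¹ * γ, mul_ne_zero (inv_ne_zero hα) hγ, ?_⟩
  rw [mul_apply_eq_comp, hAx, map_smul] at hx
  rw [← smul_smul, ← hx, inv_smul_smul₀ hα]

theorem apply_ne_zero (h : Carries A x y) (hy : y ≠ 0) : A x ≠ 0 := by
  obtain ⟨α, hα, hAx⟩ := h
  rw [hAx]
  exact smul_ne_zero hα hy

theorem of_apply_eq (h : Carries A x y) (hAB : A x = B x) : Carries B x y := by
  obtain ⟨α, hα, hAx⟩ := h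
  exact ⟨α, hα, hAB ▸ hAx⟩

theorem apply_eq_of_mul_apply_eq (h : Carries A x y) (hBC : (B * A) x = (C * A) x) :
    B y = C y := by
  obtain ⟨α, hα, hAx⟩ := h
  rw [mul_apply_eq_comp, mul_apply_eq_comp, hAx, map_smul, map_smul] at hBC
  exact smul_right_injective H hα hBC

end Carries

variable {M S K : Type*} [Monoid M] (ρ : M →* (H →L[ℂ] H)) (ξ : S → H)

def IsAtomicRepr : Prop :=
  ∀ (w : M) (s : S), (∃ (t : S) (α : ℂ), ‖α‖ = 1 ∧ ρ w (ξ s) = α • ξ t) ∨ ρ w (ξ s) = 0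

/-- For the words in one colour of a representation of `F_θ⁺` this holds because words of a fixed
length have pairwise orthogonal ranges. -/
def SeparatesWords (word : List K → M) : Prop :=
  ∀ (x x' : List K) (s t : S), x.length = x'.length →
    Carries (ρ (word x)) (ξ s) (ξ t) → Carries (ρ (word x')) (ξ s) (ξ t) → x = x'

variable {ρ ξ}

theorem IsAtomicRepr.exists_carries (h : IsAtomicRepr ρ ξ) {w : M} {s : S} (hw : ρ w (ξ s) ≠ 0) :
    ∃ t, Carries (ρ w) (ξ s) (ξ t) := by
  obtain ⟨t, α, hα, hws⟩ := (h w s).resolve_right hw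
  exact ⟨t, α, norm_ne_zero_iff.mp (hα ▸ one_ne_zero), hws⟩

end Rays

namespace FTheta

variable {I J : Type} {θ : Equiv.Perm (I × J)} {H : Type*} [NormedAddCommGroup H]
  [NormedSpace ℂ H] {S : Type*} {ρ : FTheta θ →* (H →L[ℂ] H)} {ξ : S → H}
  {u : List I} {v : List J} {s : S}

theorem carries_chain (hu : Carries (ρ (eWord θ u)) (ξ s) (ξ s))
    (hv : Carries (ρ (fWord θ v)) (ξ s) (ξ s)) (k : ℕ) :
    Carries (ρ (eWord θ ((List.range k).map (chainE θ u v)).flatten) *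
      ρ (fWord θ (chainF θ u v k))) (ξ s) (ξ s) := by
  rw [← map_mul, ← fWord_mul_eWord_pow, map_mul, map_pow]
  exact (hu.pow k).mul hv

theorem exists_carries_fWord_chainF (hξ : ξ s ≠ 0) (hρ : IsAtomicRepr ρ ξ)
    (hu : Carries (ρ (eWord θ u)) (ξ s) (ξ s)) (hv : Carries (ρ (fWord θ v)) (ξ s) (ξ s))
    (k : ℕ) : ∃ t, Carries (ρ (fWord θ (chainF θ u v k))) (ξ s) (ξ t) := by
  refine hρ.exists_carries fun h0 => (carries_chain hu hv k).apply_ne_zero hξ ?_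
  rw [mul_apply_eq_comp, h0, map_zero]

theorem chainE_eq_of_chainF_add_eq (hξ : ξ s ≠ 0) (hρ : IsAtomicRepr ρ ξ)
    (hE : SeparatesWords ρ ξ (eWord θ)) (hu : Carries (ρ (eWord θ u)) (ξ s) (ξ s))
    (hv : Carries (ρ (fWord θ v)) (ξ s) (ξ s)) {M L : ℕ}
    (h : chainF θ u v (M + L) = chainF θ u v L) :
    (∀ k < M, chainE θ u v k = u) ∧ ∀ k < L, chainE θ u v (M + k) = chainE θ u v k := by
  obtain ⟨t, ht⟩ := exists_carries_fWord_chainF hξ hρ hu hv L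
  have hlong : Carries (ρ (eWord θ ((List.range (M + L)).map (chainE θ u v)).flatten))
      (ξ t) (ξ s) := (carries_chain hu hv (M + L)).of_mul (h ▸ ht)
  have hshort : Carries
      (ρ (eWord θ (List.replicate M u ++ (List.range L).map (chainE θ u v)).flatten))
      (ξ t) (ξ s) := by
    rw [List.flatten_append, eWord_append, map_mul, eWord_flatten, List.map_replicate,
      List.prod_replicate, map_pow]
    exact ((carries_chain hu hv L).of_mul ht).mul (hu.pow M)
  have hlen : ((List.range (M + L)).map (chainE θ u v)).map List.length =
      (List.replicate M u ++ (List.range L).map (chainE θ u v)).map List.length := by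
    simp [Function.comp_def, List.map_replicate, List.range_add, List.map_const']
  have hblocks := List.eq_of_flatten_eq_of_map_length_eq
    (hE _ _ t s (by simp only [List.length_flatten, hlen]) hlong hshort) hlen
  rw [List.range_add, List.map_append, List.map_map] at hblocks
  obtain ⟨hprefix, hsuffix⟩ := List.append_inj hblocks (by simp)
  refine ⟨fun k hk => List.eq_replicate_iff.mp hprefix |>.2 _ ?_, fun k hk => ?_⟩
  · exact List.mem_map.mpr ⟨k, List.mem_range.mpr hk, rfl⟩
  · exact List.map_inj_left.mp hsuffix k (List.mem_range.mpr hk)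

theorem chainF_eq_of_succ_eq (hξ : ξ s ≠ 0) (hρ : IsAtomicRepr ρ ξ)
    (hF : SeparatesWords ρ ξ (fWord θ)) (hu : Carries (ρ (eWord θ u)) (ξ s) (ξ s))
    (hv : Carries (ρ (fWord θ v)) (ξ s) (ξ s)) {k j : ℕ}
    (hx : chainE θ u v k = chainE θ u v j) (hy : chainF θ u v (k + 1) = chainF θ u v (j + 1)) :
    chainF θ u v k = chainF θ u v j := by
  have hw : fWord θ (chainF θ u v k) * eWord θ u = fWord θ (chainF θ u v j) * eWord θ u := by
    rw [← eWord_chainE_mul_fWord_chainF_succ, ← eWord_chainE_mul_fWord_chainF_succ, hx, hy]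
  have hkj : ρ (fWord θ (chainF θ u v k)) (ξ s) = ρ (fWord θ (chainF θ u v j)) (ξ s) :=
    hu.apply_eq_of_mul_apply_eq (by rw [← map_mul, ← map_mul, hw])
  obtain ⟨t, ht⟩ := exists_carries_fWord_chainF hξ hρ hu hv k
  exact hF _ _ s t (by simp) ht (ht.of_apply_eq hkj)

theorem commute_of_chain (hF : SeparatesWords ρ ξ (fWord θ))
    (hu : Carries (ρ (eWord θ u)) (ξ s) (ξ s)) (hv : Carries (ρ (fWord θ v)) (ξ s) (ξ s))
    {k : ℕ} (hx : chainE θ u v k = u) (hy : chainF θ u v (k + 1) = v) :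
    eWord θ u * fWord θ v = fWord θ v * eWord θ u := by
  have h := eWord_chainE_mul_fWord_chainF_succ θ u v k
  rw [hx, hy] at h
  have hkv : ρ (fWord θ (chainF θ u v k)) (ξ s) = ρ (fWord θ v) (ξ s) := by
    refine hu.apply_eq_of_mul_apply_eq ?_
    obtain ⟨α, -, hα⟩ := hu
    obtain ⟨β, -, hβ⟩ := hv
    rw [← map_mul, ← h, map_mul]
    simp only [mul_apply_eq_comp, hα, hβ, map_smul, smul_smul, mul_comm]
  rw [h, hF (chainF θ u v k) v s s (by simp) (hv.of_apply_eq hkv.symm) hv]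

end FTheta

theorem commute_of_common_fixed_ray_general {m n : ℕ} (θ : Equiv.Perm (Fin m × Fin n))
    {H : Type*} [NormedAddCommGroup H] [InnerProductSpace ℂ H]
    {S : Type*} (ξ : S → H) (hon : Orthonormal ℂ ξ)
    (ρ : FTheta θ →* (H →L[ℂ] H))
    (hatomic : ∀ (w : FTheta θ) (s : S),
      (∃ (t : S) (α : ℂ), ‖α‖ = 1 ∧ ρ w (ξ s) = α • ξ t) ∨ ρ w (ξ s) = 0)
    (hEuniq : ∀ (u u' : List (Fin m)) (s t : S), u.length = u'.length →
      (∃ α : ℂ, α ≠ 0 ∧ ρ (FTheta.eWord θ u) (ξ s) = α • ξ t) →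
      (∃ α : ℂ, α ≠ 0 ∧ ρ (FTheta.eWord θ u') (ξ s) = α • ξ t) → u = u')
    (hFuniq : ∀ (v v' : List (Fin n)) (s t : S), v.length = v'.length →
      (∃ α : ℂ, α ≠ 0 ∧ ρ (FTheta.fWord θ v) (ξ s) = α • ξ t) →
      (∃ α : ℂ, α ≠ 0 ∧ ρ (FTheta.fWord θ v') (ξ s) = α • ξ t) → v = v')
    (u : List (Fin m)) (v : List (Fin n)) (s : S)
    (hu : ∃ α : ℂ, α ≠ 0 ∧ ρ (FTheta.eWord θ u) (ξ s) = α • ξ s)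
    (hv : ∃ α : ℂ, α ≠ 0 ∧ ρ (FTheta.fWord θ v) (ξ s) = α • ξ s) :
    FTheta.eWord θ u * FTheta.fWord θ v = FTheta.fWord θ v * FTheta.eWord θ u := by
  have hξ : ξ s ≠ 0 := hon.ne_zero s
  obtain ⟨L, L', hLL', hrepeat⟩ := Set.Finite.exists_lt_map_eq_of_forall_mem
    (f := FTheta.chainF θ u v) (FTheta.length_chainF θ u v)
    (List.finite_length_eq (Fin n) v.length)
  obtain ⟨N, rfl⟩ : ∃ N, L' = N + 1 + L := ⟨L' - L - 1, by omega⟩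
  obtain ⟨hfixed, hshift⟩ :=
    FTheta.chainE_eq_of_chainF_add_eq hξ hatomic hEuniq hu hv hrepeat.symm
  have hperiod : FTheta.chainF θ u v (N + 1) = v :=
    Nat.decreasingInduction
      (motive := fun k _ => FTheta.chainF θ u v (N + 1 + k) = FTheta.chainF θ u v k)
      (fun k hk => FTheta.chainF_eq_of_succ_eq hξ hatomic hFuniq hu hv (hshift k hk))
      hrepeat.symm (Nat.zero_le L)
  exact FTheta.commute_of_chain hFuniq hu hv (hfixed N N.lt_succ_self) hperiod

/-- In an atomic partially isometric representation ρ of F_θ⁺, if a basis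
ray ℂξ satisfies ρ(e_u)·ℂξ = ℂξ = ρ(f_v)·ℂξ, then e_u f_v = f_v e_u in F_θ⁺.
The hypotheses `hEuniq`, `hFuniq` encode the fact (valid in atomic representations)
that words of a fixed length in one colour have pairwise orthogonal ranges, so that
only one word of a given length can carry one basis ray onto another. -/
theorem commute_of_common_fixed_ray {m n : ℕ} (θ : Equiv.Perm (Fin m × Fin n))
    {H : Type*} [NormedAddCommGroup H] [InnerProductSpace ℂ H] [CompleteSpace H]
    {S : Type*} (ξ : S → H) (hon : Orthonormal ℂ ξ)
    (ρ : FTheta θ →* (H →L[ℂ] H))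
    (hatomic : ∀ (w : FTheta θ) (s : S),
      (∃ (t : S) (α : ℂ), ‖α‖ = 1 ∧ ρ w (ξ s) = α • ξ t) ∨ ρ w (ξ s) = 0)
    (hEuniq : ∀ (u u' : List (Fin m)) (s t : S), u.length = u'.length →
      (∃ α : ℂ, α ≠ 0 ∧ ρ (FTheta.eWord θ u) (ξ s) = α • ξ t) →
      (∃ α : ℂ, α ≠ 0 ∧ ρ (FTheta.eWord θ u') (ξ s) = α • ξ t) → u = u')
    (hFuniq : ∀ (v v' : List (Fin n)) (s t : S), v.length = v'.length →
      (∃ α : ℂ, α ≠ 0 ∧ ρ (FTheta.fWord θ v) (ξ s) = α • ξ t) →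
      (∃ α : ℂ, α ≠ 0 ∧ ρ (FTheta.fWord θ v') (ξ s) = α • ξ t) → v = v')
    (u : List (Fin m)) (v : List (Fin n)) (s : S)
    (hu : ∃ α : ℂ, α ≠ 0 ∧ ρ (FTheta.eWord θ u) (ξ s) = α • ξ s)
    (hv : ∃ α : ℂ, α ≠ 0 ∧ ρ (FTheta.fWord θ v) (ξ s) = α • ξ s) :
    FTheta.eWord θ u * FTheta.fWord θ v = FTheta.fWord θ v * FTheta.eWord θ u :=
  commute_of_common_fixed_ray_general θ ξ hon ρ hatomic hEuniq hFuniq u v s hu hv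
end

section
/- Let θ be a permutation of {1,…,m}×{1,…,n} and let ((i₀,j₀),(i₁,j₁),…,(i_{k-1},j_{k-1})) be a cycle of θ. Set u₀ = i_{k-1}⋯i_1 i_0 and v₀ = j_0 j_1 ⋯ j_{k-1}. Then e_{u₀} f_{v₀} = f_{v₀} e_{u₀} in F_θ⁺. -/
/-!
With a_s = e_{i_s} and b_s = f_{j_s}, the cycle gives a_s b_s = b_{s+1} a_{s+1}. Collapsing the
words from the middle outwards, a_{k-1}⋯a_0 b_0⋯b_{k-1} = (a_{k-1} b_{k-1})^k and
b_0⋯b_{k-1} a_{k-1}⋯a_0 = (b_0 a_0)^k, and the two bases agree because the cycle closes up: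
a_{k-1} b_{k-1} = b_k a_k = b_0 a_0.
-/

theorem FTheta.E_mul_F_s9 {I J : Type} (θ : Equiv.Perm (I × J)) (i : I) (j : J) :
    FTheta.E θ i * FTheta.F θ j = FTheta.F θ (θ (i, j)).2 * FTheta.E θ (θ (i, j)).1 :=
  (Con.eq _).mpr (ConGen.Rel.of _ _ ⟨i, j, rfl, rfl⟩)

section

variable {M : Type*} [Monoid M]

theorem mul_pow_mul_mul (a b : M) (n : ℕ) : a * (b * a) ^ n * b = (a * b) ^ (n + 1) := by
  rw [← mul_pow_mul, mul_assoc, ← pow_succ]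

theorem prod_range_reverse_mul_prod_range {a b : ℕ → M}
    (h : ∀ s, a s * b s = b (s + 1) * a (s + 1)) (t : ℕ) :
    ((List.range (t + 1)).map a).reverse.prod * ((List.range (t + 1)).map b).prod =
      (a t * b t) ^ (t + 1) := by
  induction t with
  | zero => simp
  | succ t ih =>
    calc ((List.range (t + 2)).map a).reverse.prod * ((List.range (t + 2)).map b).prod
        = a (t + 1) * (((List.range (t + 1)).map a).reverse.prod *
            ((List.range (t + 1)).map b).prod) * b (t + 1) := by
          simp only [List.range_succ (n := t + 1), List.map_append, List.reverse_append,
            List.prod_append, List.map_singleton, List.reverse_singleton, List.prod_singleton,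
            mul_assoc]
      _ = (a (t + 1) * b (t + 1)) ^ (t + 2) := by rw [ih, h, mul_pow_mul_mul]

theorem prod_range_mul_prod_range_reverse {a b : ℕ → M}
    (h : ∀ s, a s * b s = b (s + 1) * a (s + 1)) (t : ℕ) :
    ((List.range (t + 1)).map b).prod * ((List.range (t + 1)).map a).reverse.prod =
      (b 0 * a 0) ^ (t + 1) := by
  induction t generalizing a b with
  | zero => simp
  | succ t ih =>
    calc ((List.range (t + 2)).map b).prod * ((List.range (t + 2)).map a).reverse.prod
        = b 0 * (((List.range (t + 1)).map fun s => b (s + 1)).prod *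
            ((List.range (t + 1)).map fun s => a (s + 1)).reverse.prod) * a 0 := by
          simp only [List.range_succ_eq_map (n := t + 1), List.map_cons, List.map_map,
            List.reverse_cons, List.prod_cons, List.prod_append, List.prod_nil, mul_one,
            mul_assoc, Function.comp_def, Nat.succ_eq_add_one]
      _ = (b 0 * a 0) ^ (t + 2) := by rw [ih fun s => h (s + 1), ← h, mul_pow_mul_mul]

theorem commute_prod_range_reverse_prod_range {a b : ℕ → M}
    (h : ∀ s, a s * b s = b (s + 1) * a (s + 1)) {n : ℕ} (ha : a n = a 0) (hb : b n = b 0) :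
    Commute ((List.range n).map a).reverse.prod ((List.range n).map b).prod := by
  cases n with
  | zero => simp
  | succ t =>
    rw [Commute, SemiconjBy, prod_range_reverse_mul_prod_range h,
      prod_range_mul_prod_range_reverse h, h, ha, hb]

end

theorem cycle_gives_commuting_pair_general {m n : ℕ} (θ : Equiv.Perm (Fin m × Fin n))
    (k : ℕ) (is : ZMod k → Fin m) (js : ZMod k → Fin n)
    (hcycle : ∀ s : ZMod k, θ (is s, js s) = (is (s + 1), js (s + 1))) :
    FTheta.eWord θ (((List.range k).map (fun s => is (s : ZMod k))).reverse) *
        FTheta.fWord θ ((List.range k).map (fun s => js (s : ZMod k))) =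
      FTheta.fWord θ ((List.range k).map (fun s => js (s : ZMod k))) *
        FTheta.eWord θ (((List.range k).map (fun s => is (s : ZMod k))).reverse) := by
  have hrel (s : ℕ) : FTheta.E θ (is s) * FTheta.F θ (js s) =
      FTheta.F θ (js ↑(s + 1)) * FTheta.E θ (is ↑(s + 1)) := by
    rw [FTheta.E_mul_F_s9, hcycle, Nat.cast_succ]
  have hcomm := commute_prod_range_reverse_prod_range hrel (n := k)
    (by rw [ZMod.natCast_self, Nat.cast_zero]) (by rw [ZMod.natCast_self, Nat.cast_zero])
  -- The ascription `(s : ZMod k)` makes Lean coerce `List.range k` to `List (ZMod k)` by a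
  -- monadic bind, whence `List.map_eq_flatMap`.
  simpa [FTheta.eWord, FTheta.fWord, ← List.map_eq_flatMap, List.map_reverse, Function.comp_def]
    using hcomm.eq

/-- For a cycle ((i₀,j₀),…,(i_{k-1},j_{k-1})) of θ, setting
u₀ = i_{k-1}⋯i₁i₀ and v₀ = j₀j₁⋯j_{k-1}, one has e_{u₀} f_{v₀} = f_{v₀} e_{u₀}. -/
theorem cycle_gives_commuting_pair {m n : ℕ} (θ : Equiv.Perm (Fin m × Fin n))
    (k : ℕ) (hk : 0 < k) (is : ZMod k → Fin m) (js : ZMod k → Fin n)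
    (hcycle : ∀ s : ZMod k, θ (is s, js s) = (is (s + 1), js (s + 1))) :
    FTheta.eWord θ (((List.range k).map (fun s => is (s : ZMod k))).reverse) *
        FTheta.fWord θ ((List.range k).map (fun s => js (s : ZMod k))) =
      FTheta.fWord θ ((List.range k).map (fun s => js (s : ZMod k))) *
        FTheta.eWord θ (((List.range k).map (fun s => is (s : ZMod k))).reverse) :=
  cycle_gives_commuting_pair_general θ k is js hcycle
end

section
/- Let G = ℤ²/K with canonical generators g₁ = [1,0], g₂ = [0,1], and suppose σ and σ' are group-construction representations on ℓ²(G) with the same labeling functions i, j but constant scalars (α₀, β₀) and (α₀', β₀') respectively. If there is a character χ of G with α₀' = χ(g₁)α₀ and β₀' = χ(g₂)β₀, then the diagonal unitary U with entries γ_g (defined via any path from 0 to g) intertwines σ and σ': U σ(w) U* = σ'(w) for all w ∈ F_θ⁺. -/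
/-!
Take `γ = χ`. For a generator, `σ'(e_i) ξ_g = χ(g₁) α₀ ξ_{g+g₁} = χ(g + g₁) conj χ(g) σ(e_i) ξ_g`,
so `σ'(e_i)` is `σ(e_i)` conjugated by the diagonal unitary `ξ_g ↦ χ(g) ξ_g`, and likewise for the
`f_j`. The words on which `σ'` is the conjugate of `σ` form a submonoid of `F_θ⁺`, hence all of it.
-/

open ComplexConjugate

theorem FTheta.closure_range_E_union_range_F {I J : Type} (θ : Equiv.Perm (I × J)) :
    Submonoid.closure (Set.range (FTheta.E θ) ∪ Set.range (FTheta.F θ)) = ⊤ := by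
  refine (Submonoid.eq_top_iff' _).2 fun w => ?_
  induction w using Con.induction_on with | H x => ?_
  induction x using FreeMonoid.inductionOn' with
  | one => exact one_mem _
  | of_mul a x ih =>
    rw [Con.coe_mul]
    refine mul_mem (Submonoid.subset_closure ?_) ih
    cases a with
    | e i => exact .inl ⟨i, rfl⟩
    | f j => exact .inr ⟨j, rfl⟩

section MonomialTwist

variable {X H : Type*} [NormedAddCommGroup H] [InnerProductSpace ℂ H]

/-- `S` maps each basis vector `ξ g` to a multiple `c • ξ h` of a basis vector, and `S'` is
`S` conjugated by the diagonal unitary `ξ g ↦ γ g • ξ g`. The case `S (ξ g) = 0` is `c = 0`. -/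
def IsMonomialTwist (ξ : X → H) (γ : X → Circle) (S S' : H →L[ℂ] H) : Prop :=
  ∀ g, ∃ h, ∃ c : ℂ, S (ξ g) = c • ξ h ∧ S' (ξ g) = (↑(γ h / γ g) * c) • ξ h

namespace IsMonomialTwist

variable {ξ : X → H} {γ : X → Circle}

theorem one : IsMonomialTwist ξ γ 1 1 :=
  fun g => ⟨g, 1, by simp, by simp⟩

theorem mul {S S' T T' : H →L[ℂ] H} (hS : IsMonomialTwist ξ γ S S')
    (hT : IsMonomialTwist ξ γ T T') : IsMonomialTwist ξ γ (S * T) (S' * T') := by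
  intro g
  obtain ⟨h, c, hTc, hTc'⟩ := hT g
  obtain ⟨k, d, hSd, hSd'⟩ := hS h
  refine ⟨k, c * d, ?_, ?_⟩
  · simp only [mul_apply_eq_comp, hTc, map_smul, hSd, smul_smul]
  · simp only [mul_apply_eq_comp, hTc', map_smul, hSd', smul_smul]
    congr 1
    calc ↑(γ h / γ g) * c * (↑(γ k / γ h) * d) = ↑(γ k / γ h * (γ h / γ g)) * (c * d) := by
          push_cast; ring
      _ = ↑(γ k / γ g) * (c * d) := by rw [div_mul_div_cancel]

theorem inner_eq (hξ : Orthonormal ℂ ξ) {S S' : H →L[ℂ] H} (hS : IsMonomialTwist ξ γ S S')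
    (g g' : X) :
    inner ℂ (ξ g') (S' (ξ g)) = γ g' * conj (γ g : ℂ) * inner ℂ (ξ g') (S (ξ g)) := by
  classical
  obtain ⟨h, c, hc, hc'⟩ := hS g
  rw [hc, hc', inner_smul_right, inner_smul_right, orthonormal_iff_ite.1 hξ]
  split_ifs with hg'h
  · subst hg'h
    rw [Circle.coe_div, div_eq_mul_inv, ← Circle.coe_inv, Circle.coe_inv_eq_conj]
    ring
  · simp

end IsMonomialTwist

def monomialTwistSubmonoid {M : Type*} [Monoid M] (ξ : X → H) (γ : X → Circle)
    (σ σ' : M →* (H →L[ℂ] H)) : Submonoid M where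
  carrier := {w | IsMonomialTwist ξ γ (σ w) (σ' w)}
  one_mem' := by simpa only [Set.mem_ofPred_eq, map_one] using IsMonomialTwist.one
  mul_mem' hx hy := by simpa only [Set.mem_ofPred_eq, map_mul] using hx.mul hy

theorem isMonomialTwist_of_translate {G : Type*} [AddGroup G] {ξ : G → H}
    (χ : AddChar G Circle) (p : G → Prop) [DecidablePred p] (g₀ : G) (a : ℂ)
    {S S' : H →L[ℂ] H} (hS : ∀ g, S (ξ g) = if p g then a • ξ (g + g₀) else 0)
    (hS' : ∀ g, S' (ξ g) = if p g then (χ g₀ * a) • ξ (g + g₀) else 0) :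
    IsMonomialTwist ξ χ S S' := by
  intro g
  refine ⟨g + g₀, if p g then a else 0, ?_, ?_⟩
  · rw [hS]; split_ifs <;> simp
  · rw [hS', AddChar.map_add_eq_mul, mul_div_cancel_left]
    split_ifs <;> simp

end MonomialTwist

theorem diagonal_unitary_intertwines_general {m n : ℕ} (θ : Equiv.Perm (Fin m × Fin n))
    (K : AddSubgroup (ℤ × ℤ))
    {Hsp : Type*} [NormedAddCommGroup Hsp] [InnerProductSpace ℂ Hsp]
    (ξ : ((ℤ × ℤ) ⧸ K) → Hsp) (hon : Orthonormal ℂ ξ)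
    (g₁ g₂ : (ℤ × ℤ) ⧸ K)
    (iG : ((ℤ × ℤ) ⧸ K) → Fin m) (jG : ((ℤ × ℤ) ⧸ K) → Fin n)
    (α₀ β₀ α₀' β₀' : ℂ)
    (σ σ' : FTheta θ →* (Hsp →L[ℂ] Hsp))
    (hσE : ∀ (i : Fin m) (g), σ (FTheta.E θ i) (ξ g) =
      if i = iG g then α₀ • ξ (g + g₁) else 0)
    (hσF : ∀ (j : Fin n) (g), σ (FTheta.F θ j) (ξ g) =
      if j = jG g then β₀ • ξ (g + g₂) else 0)
    (hσ'E : ∀ (i : Fin m) (g), σ' (FTheta.E θ i) (ξ g) =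
      if i = iG g then α₀' • ξ (g + g₁) else 0)
    (hσ'F : ∀ (j : Fin n) (g), σ' (FTheta.F θ j) (ξ g) =
      if j = jG g then β₀' • ξ (g + g₂) else 0)
    (χ : AddChar ((ℤ × ℤ) ⧸ K) Circle)
    (hα' : α₀' = (χ g₁ : ℂ) * α₀) (hβ' : β₀' = (χ g₂ : ℂ) * β₀) :
    ∃ γ : ((ℤ × ℤ) ⧸ K) → ℂ, (∀ g, ‖γ g‖ = 1) ∧
      ∀ (w : FTheta θ) (g g' : (ℤ × ℤ) ⧸ K),
        (inner ℂ (ξ g') (σ' w (ξ g)) : ℂ) =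
          γ g' * (starRingEnd ℂ) (γ g) * (inner ℂ (ξ g') (σ w (ξ g)) : ℂ) := by
  refine ⟨fun g => χ g, fun g => Circle.norm_coe _, fun w g g' => ?_⟩
  have hgens : Set.range (FTheta.E θ) ∪ Set.range (FTheta.F θ) ⊆ monomialTwistSubmonoid ξ χ σ σ' := by
    rintro _ (⟨i, rfl⟩ | ⟨j, rfl⟩)
    · exact isMonomialTwist_of_translate χ _ g₁ α₀ (hσE i) (hα' ▸ hσ'E i)
    · exact isMonomialTwist_of_translate χ _ g₂ β₀ (hσF j) (hβ' ▸ hσ'F j)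
  have hw : w ∈ monomialTwistSubmonoid ξ χ σ σ' := by
    refine Submonoid.closure_le.2 hgens ?_
    rw [FTheta.closure_range_E_union_range_F]
    exact Submonoid.mem_top w
  exact IsMonomialTwist.inner_eq hon hw g g'

/-- For G = ℤ²/K, two group-construction representations with the same
labeling functions whose constant scalars differ by a character χ of G
(α₀' = χ(g₁)α₀, β₀' = χ(g₂)β₀) are intertwined by a diagonal unitary: there are
unimodular scalars γ_g with ⟨ξ_{g'}, σ'(w) ξ_g⟩ = γ_{g'} conj(γ_g) ⟨ξ_{g'}, σ(w) ξ_g⟩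
for every w ∈ F_θ⁺, i.e. U σ(w) U* = σ'(w) for the diagonal unitary U ξ_g = γ_g ξ_g. -/
theorem diagonal_unitary_intertwines {m n : ℕ} (θ : Equiv.Perm (Fin m × Fin n))
    (K : AddSubgroup (ℤ × ℤ))
    {Hsp : Type*} [NormedAddCommGroup Hsp] [InnerProductSpace ℂ Hsp] [CompleteSpace Hsp]
    (ξ : ((ℤ × ℤ) ⧸ K) → Hsp) (hon : Orthonormal ℂ ξ)
    (hspan : (Submodule.span ℂ (Set.range ξ)).topologicalClosure = ⊤)
    (g₁ g₂ : (ℤ × ℤ) ⧸ K)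
    (hg₁ : g₁ = QuotientAddGroup.mk ((1, 0) : ℤ × ℤ))
    (hg₂ : g₂ = QuotientAddGroup.mk ((0, 1) : ℤ × ℤ))
    (iG : ((ℤ × ℤ) ⧸ K) → Fin m) (jG : ((ℤ × ℤ) ⧸ K) → Fin n)
    (hcompat : ∀ g, FTheta.E θ (iG (g + g₂)) * FTheta.F θ (jG g) =
      FTheta.F θ (jG (g + g₁)) * FTheta.E θ (iG g))
    (α₀ β₀ α₀' β₀' : ℂ) (hα : ‖α₀‖ = 1) (hβ : ‖β₀‖ = 1)
    (σ σ' : FTheta θ →* (Hsp →L[ℂ] Hsp))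
    (hσE : ∀ (i : Fin m) (g), σ (FTheta.E θ i) (ξ g) =
      if i = iG g then α₀ • ξ (g + g₁) else 0)
    (hσF : ∀ (j : Fin n) (g), σ (FTheta.F θ j) (ξ g) =
      if j = jG g then β₀ • ξ (g + g₂) else 0)
    (hσ'E : ∀ (i : Fin m) (g), σ' (FTheta.E θ i) (ξ g) =
      if i = iG g then α₀' • ξ (g + g₁) else 0)
    (hσ'F : ∀ (j : Fin n) (g), σ' (FTheta.F θ j) (ξ g) =
      if j = jG g then β₀' • ξ (g + g₂) else 0)
    (χ : AddChar ((ℤ × ℤ) ⧸ K) Circle)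
    (hα' : α₀' = (χ g₁ : ℂ) * α₀) (hβ' : β₀' = (χ g₂ : ℂ) * β₀) :
    ∃ γ : ((ℤ × ℤ) ⧸ K) → ℂ, (∀ g, ‖γ g‖ = 1) ∧
      ∀ (w : FTheta θ) (g g' : (ℤ × ℤ) ⧸ K),
        (inner ℂ (ξ g') (σ' w (ξ g)) : ℂ) =
          γ g' * (starRingEnd ℂ) (γ g) * (inner ℂ (ξ g') (σ w (ξ g)) : ℂ) :=
  diagonal_unitary_intertwines_general θ K ξ hon g₁ g₂ iG jG α₀ β₀ α₀' β₀' σ σ' hσE hσF hσ'E hσ'F χ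
    hα' hβ'
end

section
/- Let G be a countable abelian group with designated generators g₁, g₂, and let σ be a group-construction representation of F_θ⁺ on ℓ²(G) whose symmetry group H = { h ∈ G : i(g+h)=i(g), j(g+h)=j(g) ∀g } is trivial. Then the weak-* closed algebra (von Neumann algebra) generated by σ(F_θ⁺) contains all rank-one operators ξ_g ξ_{g'}^* for g, g' ∈ G; in particular σ is an irreducible representation. -/
open scoped InnerProductSpace ComplexConjugate

section ShiftOperators

variable {G H : Type*} [NormedAddCommGroup H] [InnerProductSpace ℂ H] [CompleteSpace H]
  {ξ : G → H}

lemma Orthonormal.eq_of_forall_inner_eq (hon : Orthonormal ℂ ξ)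
    (hspan : (Submodule.span ℂ (Set.range ξ)).topologicalClosure = ⊤) {v w : H}
    (h : ∀ g, ⟪ξ g, v⟫_ℂ = ⟪ξ g, w⟫_ℂ) : v = w := by
  let b := HilbertBasis.mk hon hspan.ge
  apply b.repr.injective
  ext g
  simpa [b, HilbertBasis.repr_apply_apply] using h g

variable [AddGroup G] {A T : H →L[ℂ] H} {α : ℂ} {S : G → Prop} [DecidablePred S] {a : G}

lemma adjoint_apply_add_of_apply_eq_ite (hon : Orthonormal ℂ ξ)
    (hspan : (Submodule.span ℂ (Set.range ξ)).topologicalClosure = ⊤)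
    (hA : ∀ g, A (ξ g) = if S g then α • ξ (g + a) else 0) (q : G) :
    A.adjoint (ξ (q + a)) = if S q then conj α • ξ q else 0 := by
  classical
  refine hon.eq_of_forall_inner_eq hspan fun p => ?_
  rw [ContinuousLinearMap.adjoint_inner_right, hA]
  by_cases hpq : p = q
  · subst hpq
    split_ifs <;> simp [inner_smul_left, hon.1]
  · split_ifs <;> simp [inner_smul_left, orthonormal_iff_ite.mp hon, hpq]

lemma inner_apply_eq_ite_of_comm (hon : Orthonormal ℂ ξ)
    (hspan : (Submodule.span ℂ (Set.range ξ)).topologicalClosure = ⊤)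
    (hA : ∀ g, A (ξ g) = if S g then α • ξ (g + a) else 0) (hα : α ≠ 0)
    (hT : T ∘L A = A ∘L T) {p : G} (hp : S p) (q : G) :
    ⟪ξ p, T (ξ q)⟫_ℂ = if S q then ⟪ξ (p + a), T (ξ (q + a))⟫_ℂ else 0 := by
  have hAT : T (A (ξ q)) = A (T (ξ q)) := congrArg (· (ξ q)) hT
  have key : α * ⟪ξ p, T (ξ q)⟫_ℂ = ⟪ξ (p + a), T (A (ξ q))⟫_ℂ := by
    rw [hAT, ← A.adjoint_inner_left,
      adjoint_apply_add_of_apply_eq_ite hon hspan hA, if_pos hp, inner_smul_left,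
      Complex.conj_conj]
  rw [hA] at key
  split_ifs at key ⊢ with hq
  · rwa [map_smul, inner_smul_right, mul_right_inj' hα] at key
  · rwa [map_zero, inner_zero_right, mul_eq_zero, or_iff_right hα] at key

lemma inner_apply_add_eq_ite_of_adjoint_comm (hon : Orthonormal ℂ ξ)
    (hspan : (Submodule.span ℂ (Set.range ξ)).topologicalClosure = ⊤)
    (hA : ∀ g, A (ξ g) = if S g then α • ξ (g + a) else 0) (hα : α ≠ 0)
    (hT : T ∘L A.adjoint = A.adjoint ∘L T) {p : G} (hp : S p) (q : G) :
    ⟪ξ (p + a), T (ξ (q + a))⟫_ℂ = if S q then ⟪ξ p, T (ξ q)⟫_ℂ else 0 := by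
  have hAT : T (A.adjoint (ξ (q + a))) = A.adjoint (T (ξ (q + a))) :=
    congrArg (· (ξ (q + a))) hT
  have key : conj α * ⟪ξ (p + a), T (ξ (q + a))⟫_ℂ = ⟪ξ p, T (A.adjoint (ξ (q + a)))⟫_ℂ := by
    rw [hAT, ContinuousLinearMap.adjoint_inner_right, hA, if_pos hp, inner_smul_left]
  rw [adjoint_apply_add_of_apply_eq_ite hon hspan hA] at key
  have hα' : conj α ≠ 0 := (map_ne_zero _).mpr hα
  split_ifs at key ⊢ with hq
  · rwa [map_smul, inner_smul_right, mul_right_inj' hα'] at key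
  · rwa [map_zero, inner_zero_right, mul_eq_zero, or_iff_right hα'] at key

end ShiftOperators

lemma Function.Periodic.eq_of_closure_eq_top {G α : Type*} [AddCommGroup G] {f : G → α}
    {s : Set G} (hs : AddSubgroup.closure s = ⊤) (hf : ∀ c ∈ s, Function.Periodic f c)
    (x y : G) : f y = f x := by
  let periods : AddSubgroup G :=
    { carrier := {c | Function.Periodic f c}
      zero_mem' := fun z => by rw [add_zero]
      add_mem' := fun h₁ h₂ => h₁.add_period h₂
      neg_mem' := fun h => h.neg }
  have hle : AddSubgroup.closure s ≤ periods := (AddSubgroup.closure_le _).mpr hf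
  have hyx : Function.Periodic f (y - x) := hle (hs ▸ AddSubgroup.mem_top (y - x))
  simpa using hyx x

section GeneratorFamily

variable {G H I : Type*} [AddCommGroup G] [DecidableEq I] [NormedAddCommGroup H]
  [InnerProductSpace ℂ H] [CompleteSpace H] {ξ : G → H} {A : I → H →L[ℂ] H} {iG : G → I}
  {α : ℂ} {a : G} {T : H →L[ℂ] H}

lemma periodic_inner_apply_add_of_comm (hon : Orthonormal ℂ ξ)
    (hspan : (Submodule.span ℂ (Set.range ξ)).topologicalClosure = ⊤)
    (hA : ∀ i g, A i (ξ g) = if i = iG g then α • ξ (g + a) else 0) (hα : α ≠ 0)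
    (hT : ∀ i, T ∘L A i = A i ∘L T) (hT' : ∀ i, T ∘L (A i).adjoint = (A i).adjoint ∘L T)
    (h : G) : Function.Periodic (fun p => ⟪ξ p, T (ξ (p + h))⟫_ℂ) a := by
  intro p
  dsimp only
  rw [add_right_comm p a h,
    inner_apply_add_eq_ite_of_adjoint_comm hon hspan (hA (iG p)) hα (hT' _) rfl,
    inner_apply_eq_ite_of_comm hon hspan (hA (iG p)) hα (hT _) rfl]
  split_ifs <;> rfl

lemma inner_apply_add_eq_zero_of_comm (hon : Orthonormal ℂ ξ)
    (hspan : (Submodule.span ℂ (Set.range ξ)).topologicalClosure = ⊤)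
    (hA : ∀ i g, A i (ξ g) = if i = iG g then α • ξ (g + a) else 0) (hα : α ≠ 0)
    (hT : ∀ i, T ∘L A i = A i ∘L T) {p h : G} (hph : iG (p + h) ≠ iG p) :
    ⟪ξ p, T (ξ (p + h))⟫_ℂ = 0 := by
  rw [inner_apply_eq_ite_of_comm hon hspan (hA (iG p)) hα (hT _) rfl, if_neg hph.symm]

end GeneratorFamily

lemma eq_smul_id_of_inner_apply {ι H : Type*} [NormedAddCommGroup H] [InnerProductSpace ℂ H]
    [CompleteSpace H] {ξ : ι → H} (hon : Orthonormal ℂ ξ)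
    (hspan : (Submodule.span ℂ (Set.range ξ)).topologicalClosure = ⊤) {T : H →L[ℂ] H} {c : ℂ}
    (hdiag : ∀ p, ⟪ξ p, T (ξ p)⟫_ℂ = c) (hoff : ∀ p q, p ≠ q → ⟪ξ p, T (ξ q)⟫_ℂ = 0) :
    T = c • ContinuousLinearMap.id ℂ H := by
  classical
  refine ContinuousLinearMap.ext_on
    (Submodule.dense_iff_topologicalClosure_eq_top.mpr hspan) ?_
  rintro _ ⟨q, rfl⟩
  refine hon.eq_of_forall_inner_eq hspan fun p => ?_
  rw [smul_apply, ContinuousLinearMap.id_apply, inner_smul_right,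
    orthonormal_iff_ite.mp hon]
  by_cases hpq : p = q
  · rw [hpq, hdiag, if_pos rfl, mul_one]
  · rw [hoff p q hpq, if_neg hpq, mul_zero]

theorem trivial_symmetry_irreducible_general {m n : ℕ} (θ : Equiv.Perm (Fin m × Fin n))
    {G : Type*} [AddCommGroup G] (g₁ g₂ : G)
    (hgen : AddSubgroup.closure ({g₁, g₂} : Set G) = ⊤)
    {Hsp : Type*} [NormedAddCommGroup Hsp] [InnerProductSpace ℂ Hsp] [CompleteSpace Hsp]
    (ξ : G → Hsp) (hon : Orthonormal ℂ ξ)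
    (hspan : (Submodule.span ℂ (Set.range ξ)).topologicalClosure = ⊤)
    (iG : G → Fin m) (jG : G → Fin n)
    (α₀ β₀ : ℂ) (hα : ‖α₀‖ = 1) (hβ : ‖β₀‖ = 1)
    (σ : FTheta θ →* (Hsp →L[ℂ] Hsp))
    (hσE : ∀ (i : Fin m) (g), σ (FTheta.E θ i) (ξ g) =
      if i = iG g then α₀ • ξ (g + g₁) else 0)
    (hσF : ∀ (j : Fin n) (g), σ (FTheta.F θ j) (ξ g) =
      if j = jG g then β₀ • ξ (g + g₂) else 0)
    (htrivial : ∀ h : G, h ≠ 0 → ∃ g : G, iG (g + h) ≠ iG g ∨ jG (g + h) ≠ jG g) :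
    (∀ g g' : G, ∀ T : Hsp →L[ℂ] Hsp,
      (∀ w : FTheta θ, T ∘L σ w = σ w ∘L T) →
      (∀ w : FTheta θ, T ∘L ContinuousLinearMap.adjoint (σ w) =
        ContinuousLinearMap.adjoint (σ w) ∘L T) →
      T ∘L ((innerSL ℂ (ξ g')).smulRight (ξ g)) =
        ((innerSL ℂ (ξ g')).smulRight (ξ g)) ∘L T) ∧
    (∀ T : Hsp →L[ℂ] Hsp,
      (∀ w : FTheta θ, T ∘L σ w = σ w ∘L T) →
      (∀ w : FTheta θ, T ∘L ContinuousLinearMap.adjoint (σ w) =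
        ContinuousLinearMap.adjoint (σ w) ∘L T) →
      ∃ c : ℂ, T = c • ContinuousLinearMap.id ℂ Hsp) := by
  have hα₀ : α₀ ≠ 0 := norm_ne_zero_iff.mp (hα.symm ▸ one_ne_zero)
  have hβ₀ : β₀ ≠ 0 := norm_ne_zero_iff.mp (hβ.symm ▸ one_ne_zero)
  have scalar : ∀ T : Hsp →L[ℂ] Hsp, (∀ w, T ∘L σ w = σ w ∘L T) →
      (∀ w, T ∘L (σ w).adjoint = (σ w).adjoint ∘L T) →
      ∃ c : ℂ, T = c • ContinuousLinearMap.id ℂ Hsp := by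
    intro T hT hT'
    have hconst (h p : G) : ⟪ξ p, T (ξ (p + h))⟫_ℂ = ⟪ξ 0, T (ξ (0 + h))⟫_ℂ := by
      refine Function.Periodic.eq_of_closure_eq_top (f := fun p => ⟪ξ p, T (ξ (p + h))⟫_ℂ)
        hgen ?_ 0 p
      rintro c (rfl | rfl)
      · exact periodic_inner_apply_add_of_comm hon hspan hσE hα₀ (fun _ => hT _)
          (fun _ => hT' _) h
      · exact periodic_inner_apply_add_of_comm hon hspan hσF hβ₀ (fun _ => hT _)
          (fun _ => hT' _) h
    have hoff (h : G) (hh : h ≠ 0) (p : G) : ⟪ξ p, T (ξ (p + h))⟫_ℂ = 0 := by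
      obtain ⟨g, hg | hg⟩ := htrivial h hh <;> rw [hconst h p, ← hconst h g]
      · exact inner_apply_add_eq_zero_of_comm hon hspan hσE hα₀ (fun _ => hT _) hg
      · exact inner_apply_add_eq_zero_of_comm hon hspan hσF hβ₀ (fun _ => hT _) hg
    refine ⟨⟪ξ 0, T (ξ 0)⟫_ℂ,
      eq_smul_id_of_inner_apply hon hspan (fun p => ?_) fun p q hpq => ?_⟩
    · simpa using hconst 0 p
    · simpa using hoff (q - p) (sub_ne_zero.mpr (Ne.symm hpq)) p
  refine ⟨fun g g' T hT hT' => ?_, scalar⟩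
  obtain ⟨c, rfl⟩ := scalar T hT hT'
  ext x
  simp

/-- A group-construction representation with trivial symmetry group is
irreducible: every operator in the commutant of {σ(w), σ(w)* : w ∈ F_θ⁺} commutes with
all rank-one operators ξ_g ξ_{g'}* (i.e. the von Neumann algebra generated by σ(F_θ⁺)
contains them), and is a scalar multiple of the identity. -/
theorem trivial_symmetry_irreducible {m n : ℕ} (θ : Equiv.Perm (Fin m × Fin n))
    {G : Type*} [AddCommGroup G] [Countable G] (g₁ g₂ : G)
    (hgen : AddSubgroup.closure ({g₁, g₂} : Set G) = ⊤)
    {Hsp : Type*} [NormedAddCommGroup Hsp] [InnerProductSpace ℂ Hsp] [CompleteSpace Hsp]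
    (ξ : G → Hsp) (hon : Orthonormal ℂ ξ)
    (hspan : (Submodule.span ℂ (Set.range ξ)).topologicalClosure = ⊤)
    (iG : G → Fin m) (jG : G → Fin n)
    (hcompat : ∀ g, FTheta.E θ (iG (g + g₂)) * FTheta.F θ (jG g) =
      FTheta.F θ (jG (g + g₁)) * FTheta.E θ (iG g))
    (α₀ β₀ : ℂ) (hα : ‖α₀‖ = 1) (hβ : ‖β₀‖ = 1)
    (σ : FTheta θ →* (Hsp →L[ℂ] Hsp))
    (hσE : ∀ (i : Fin m) (g), σ (FTheta.E θ i) (ξ g) =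
      if i = iG g then α₀ • ξ (g + g₁) else 0)
    (hσF : ∀ (j : Fin n) (g), σ (FTheta.F θ j) (ξ g) =
      if j = jG g then β₀ • ξ (g + g₂) else 0)
    (htrivial : ∀ h : G, h ≠ 0 → ∃ g : G, iG (g + h) ≠ iG g ∨ jG (g + h) ≠ jG g) :
    (∀ g g' : G, ∀ T : Hsp →L[ℂ] Hsp,
      (∀ w : FTheta θ, T ∘L σ w = σ w ∘L T) →
      (∀ w : FTheta θ, T ∘L ContinuousLinearMap.adjoint (σ w) =
        ContinuousLinearMap.adjoint (σ w) ∘L T) →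
      T ∘L ((innerSL ℂ (ξ g')).smulRight (ξ g)) =
        ((innerSL ℂ (ξ g')).smulRight (ξ g)) ∘L T) ∧
    (∀ T : Hsp →L[ℂ] Hsp,
      (∀ w : FTheta θ, T ∘L σ w = σ w ∘L T) →
      (∀ w : FTheta θ, T ∘L ContinuousLinearMap.adjoint (σ w) =
        ContinuousLinearMap.adjoint (σ w) ∘L T) →
      ∃ c : ℂ, T = c • ContinuousLinearMap.id ℂ Hsp) :=
  trivial_symmetry_irreducible_general θ g₁ g₂ hgen ξ hon hspan iG jG α₀ β₀ hα hβ σ hσE hσF htrivial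
end
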